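/- For ladders $\mathbf{m} = \Delta_1 + \cdots + \Delta_N$ and $\mathbf{n} = \Delta'_1 + \cdots + \Delta'_{N'}$ with segments indexed in left-aligned increasing order of beginnings, the negation of the condition $\mathrm{LC}_k(\mathbf{m},\mathbf{n})$ is equivalent to the condition $\mathrm{NC}_k(\mathbf{m},\mathbf{n})$: there exist indices $1 \le i \le N$, $1 \le j \le N'$, and $m \ge 0$ such that (i) $(i+l, j+l) \in X^{(k)}_{\mathbf{m},\mathbf{n}}$ for all $0 \le l \le m$; (ii) $(i, j-1) \notin Y^{(k)}_{\mathbf{m},\mathbf{n}}$ and $(i+m+1, j+m) \notin Y^{(k)}_{\mathbf{m},\mathbf{n}}$; (iii) $(i+l+1, j+l) \in Y^{(k)}_{\mathbf{m},\mathbf{n}} \setminus X^{(k)}_{\mathbf{m},\mathbf{n}}$ for all $0 \le l \le m-1$. -/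
import Mathlib


/-- `Δ ≺ Δ'` : the segment `Δ = (a,b)` precedes `Δ'`. -/
def SegPrec (Δ Δ' : ℤ × ℤ) : Prop :=
  Δ.1 + 1 ≤ Δ'.1 ∧ Δ'.1 ≤ Δ.2 + 1 ∧ Δ.2 + 1 ≤ Δ'.2

/-- `Δ ≺_k Δ'` : `Δ` k-precedes `Δ'`. -/
def SegPrecK (k : ℤ) (Δ Δ' : ℤ × ℤ) : Prop :=
  SegPrec Δ Δ' ∧ Δ'.2 - Δ.1 < k

/-- `←Δ = [a-1, b-1]`. -/
def shiftL (Δ : ℤ × ℤ) : ℤ × ℤ := (Δ.1 - 1, Δ.2 - 1)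

/-- `X^{(k)}_{m,n}` for multisegments indexed by `1, …, N` and `1, …, N'`. -/
def XsetK (k : ℤ) (N N' : ℕ) (Δ Δ' : ℕ → ℤ × ℤ) : Set (ℕ × ℕ) :=
  {p | 1 ≤ p.1 ∧ p.1 ≤ N ∧ 1 ≤ p.2 ∧ p.2 ≤ N' ∧ SegPrecK k (Δ p.1) (Δ' p.2)}

/-- `Y^{(k)}_{m,n}`. -/
def YsetK (k : ℤ) (N N' : ℕ) (Δ Δ' : ℕ → ℤ × ℤ) : Set (ℕ × ℕ) :=
  {p | 1 ≤ p.1 ∧ p.1 ≤ N ∧ 1 ≤ p.2 ∧ p.2 ≤ N' ∧ SegPrecK k (shiftL (Δ p.1)) (Δ' p.2)}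

/-- The condition `LC_k(m, n)`. -/
def LCk (k : ℤ) (N N' : ℕ) (Δ Δ' : ℕ → ℤ × ℤ) : Prop :=
  ∃ f : ℕ × ℕ → ℕ × ℕ,
    Set.InjOn f (XsetK k N N' Δ Δ') ∧
    ∀ p ∈ XsetK k N N' Δ Δ', f p ∈ YsetK k N N' Δ Δ' ∧
      (((f p).1 = p.1 ∧ SegPrecK k (Δ' (f p).2) (Δ' p.2)) ∨
        ((f p).2 = p.2 ∧ SegPrecK k (Δ p.1) (Δ (f p).1)))

/-- The condition `NC_k(m, n)`. -/
def NCk (k : ℤ) (N N' : ℕ) (Δ Δ' : ℕ → ℤ × ℤ) : Prop :=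
  ∃ i j m : ℕ,
    (∀ l, l ≤ m → (i + l, j + l) ∈ XsetK k N N' Δ Δ') ∧
    (i, j - 1) ∉ YsetK k N N' Δ Δ' ∧
    (i + m + 1, j + m) ∉ YsetK k N N' Δ Δ' ∧
    (∀ l, l < m → (i + l + 1, j + l) ∈ YsetK k N N' Δ Δ' \ XsetK k N N' Δ Δ')


section Aux
variable {k : ℤ} {N N' : ℕ} {Δ Δ' : ℕ → ℤ × ℤ}

def Lad (N : ℕ) (Δ : ℕ → ℤ × ℤ) : Prop :=
  ∀ i j, 1 ≤ i → i < j → j ≤ N → (Δ i).1 < (Δ j).1 ∧ (Δ i).2 < (Δ j).2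

lemma memX (i j : ℕ) :
    (i, j) ∈ XsetK k N N' Δ Δ' ↔ 1 ≤ i ∧ i ≤ N ∧ 1 ≤ j ∧ j ≤ N' ∧
      ((Δ i).1 + 1 ≤ (Δ' j).1 ∧ (Δ' j).1 ≤ (Δ i).2 + 1 ∧ (Δ i).2 + 1 ≤ (Δ' j).2) ∧
      (Δ' j).2 - (Δ i).1 < k := Iff.rfl

lemma memY (i j : ℕ) :
    (i, j) ∈ YsetK k N N' Δ Δ' ↔ 1 ≤ i ∧ i ≤ N ∧ 1 ≤ j ∧ j ≤ N' ∧
      (((Δ i).1 - 1) + 1 ≤ (Δ' j).1 ∧ (Δ' j).1 ≤ ((Δ i).2 - 1) + 1 ∧ ((Δ i).2 - 1) + 1 ≤ (Δ' j).2) ∧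
      (Δ' j).2 - ((Δ i).1 - 1) < k := Iff.rfl

lemma lad_le (h : Lad N Δ) {p q : ℕ} (h1 : 1 ≤ p) (h2 : p ≤ q) (h3 : q ≤ N) :
    (Δ p).1 ≤ (Δ q).1 ∧ (Δ p).2 ≤ (Δ q).2 := by
  rcases lt_or_eq_of_le h2 with h4 | h4
  · exact ⟨le_of_lt (h p q h1 h4 h3).1, le_of_lt (h p q h1 h4 h3).2⟩
  · simp [h4]

/-- converse: if a'_c < a'_q then c < q (given ranges). -/
lemma lad_rev (h : Lad N Δ) {p q : ℕ} (h1 : 1 ≤ p) (h3 : p ≤ N) (h1' : 1 ≤ q) (h3' : q ≤ N)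
    (hlt : (Δ p).1 < (Δ q).1) : p < q := by
  by_contra hc
  exact absurd (lad_le h h1' (not_lt.1 hc) h3).1 (by omega)

/-- L0 : (i,j) ∈ X, (i,c) ∈ Y, c < j ⇒ (i, j-1) ∈ Y -/
lemma lem_L0 (hlad' : Lad N' Δ') {i j c : ℕ}
    (hx : (i, j) ∈ XsetK k N N' Δ Δ') (hy : (i, c) ∈ YsetK k N N' Δ Δ') (hc : c < j) :
    (i, j - 1) ∈ YsetK k N N' Δ Δ' := by
  obtain ⟨hi1, hi2, hj1, hj2, ⟨x1, x2, x3⟩, x4⟩ := (memX i j).1 hx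
  obtain ⟨_, _, hc1, hc2, ⟨y1, y2, y3⟩, y4⟩ := (memY i c).1 hy
  have hj' : 1 ≤ j - 1 := by omega
  have e1 : j - 1 + 1 = j := by omega
  have m1 : (Δ' c).1 ≤ (Δ' (j-1)).1 ∧ (Δ' c).2 ≤ (Δ' (j-1)).2 :=
    lad_le hlad' hc1 (by omega) (by omega)
  have m2 : (Δ' (j-1)).1 < (Δ' j).1 ∧ (Δ' (j-1)).2 < (Δ' j).2 := by
    have := hlad' (j-1) j hj' (by omega) hj2; exact this
  refine (memY i (j-1)).2 ⟨hi1, hi2, hj', by omega, ⟨by omega, by omega, by omega⟩, by omega⟩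
end Aux

section Geo
variable {k : ℤ} {N N' : ℕ} {Δ Δ' : ℕ → ℤ × ℤ}

/-- L2 : P_{l-1}=(p,q) ∈ X, P_l=(p+1,q+1) ∈ X, (p+1,c) ∈ Y, c < q ⇒ (p+1, q) ∈ X -/
lemma lem_L2 (hlad : Lad N Δ) (hlad' : Lad N' Δ') {p q c : ℕ}
    (hx0 : (p, q) ∈ XsetK k N N' Δ Δ') (hx1 : (p+1, q+1) ∈ XsetK k N N' Δ Δ')
    (hy : (p+1, c) ∈ YsetK k N N' Δ Δ') (hc : c < q) :
    (p+1, q) ∈ XsetK k N N' Δ Δ' := by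
  obtain ⟨hp1, hp2, hq1, hq2, ⟨x1, x2, x3⟩, x4⟩ := (memX p q).1 hx0
  obtain ⟨hp1', hp2', hq1', hq2', ⟨u1, u2, u3⟩, u4⟩ := (memX (p+1) (q+1)).1 hx1
  obtain ⟨_, _, hc1, hc2, ⟨y1, y2, y3⟩, y4⟩ := (memY (p+1) c).1 hy
  have s1 := hlad' c q hc1 hc hq2
  have s2 := hlad' q (q+1) hq1 (by omega) hq2'
  have s3 := hlad p (p+1) hp1 (by omega) hp2'
  refine (memX (p+1) q).2 ⟨by omega, hp2', hq1, hq2, ⟨by omega, by omega, by omega⟩, by omega⟩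

/-- D2 : P_{l+1}=(p+1,q+1) ∈ X, (r,q) ∈ Y, p+2 ≤ r ⇒ (p+2,q+1) ∈ X -/
lemma lem_D2 (hlad : Lad N Δ) (hlad' : Lad N' Δ') {p q r : ℕ}
    (hx1 : (p+1, q+1) ∈ XsetK k N N' Δ Δ') (hy : (r, q) ∈ YsetK k N N' Δ Δ')
    (hr : p + 2 ≤ r) : (p+2, q+1) ∈ XsetK k N N' Δ Δ' := by
  obtain ⟨hp1', hp2', hq1', hq2', ⟨u1, u2, u3⟩, u4⟩ := (memX (p+1) (q+1)).1 hx1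
  obtain ⟨hr1, hr2, hq1, hq2, ⟨y1, y2, y3⟩, y4⟩ := (memY r q).1 hy
  have m1 := lad_le hlad (show 1 ≤ p+2 by omega) hr hr2
  have s1 := hlad' q (q+1) hq1 (by omega) hq2'
  have s2 := hlad (p+1) (p+2) hp1' (by omega) (by omega)
  refine (memX (p+2) (q+1)).2 ⟨by omega, by omega, by omega, hq2',
    ⟨by omega, by omega, by omega⟩, by omega⟩

/-- R4a : (p,q) ∈ X, (r,q) ∈ Y, p+1 ≤ r ⇒ (p+1,q) ∈ Y -/
lemma lem_R4a (hlad : Lad N Δ) {p q r : ℕ}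
    (hx : (p, q) ∈ XsetK k N N' Δ Δ') (hy : (r, q) ∈ YsetK k N N' Δ Δ')
    (hr : p + 1 ≤ r) : (p+1, q) ∈ YsetK k N N' Δ Δ' := by
  obtain ⟨hp1, hp2, hq1, hq2, ⟨x1, x2, x3⟩, x4⟩ := (memX p q).1 hx
  obtain ⟨hr1, hr2, _, _, ⟨y1, y2, y3⟩, y4⟩ := (memY r q).1 hy
  have m1 := lad_le hlad (show 1 ≤ p+1 by omega) hr hr2
  have s1 := hlad p (p+1) hp1 (by omega) (by omega)
  refine (memY (p+1) q).2 ⟨by omega, by omega, hq1, hq2,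
    ⟨by omega, by omega, by omega⟩, by omega⟩

/-- R4b : (p,q) ∈ X, (r,c) ∈ Y, c+1 = q, p+1 ≤ r ⇒ (p+1,q) ∈ Y -/
lemma lem_R4b (hlad : Lad N Δ) (hlad' : Lad N' Δ') {p q c r : ℕ}
    (hx : (p, q) ∈ XsetK k N N' Δ Δ') (hy : (r, c) ∈ YsetK k N N' Δ Δ')
    (hcq : c + 1 = q) (hr : p + 1 ≤ r) : (p+1, q) ∈ YsetK k N N' Δ Δ' := by
  obtain ⟨hp1, hp2, hq1, hq2, ⟨x1, x2, x3⟩, x4⟩ := (memX p q).1 hx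
  obtain ⟨hr1, hr2, hc1, hc2, ⟨y1, y2, y3⟩, y4⟩ := (memY r c).1 hy
  have m1 := lad_le hlad (show 1 ≤ p+1 by omega) hr hr2
  have s1 := hlad' c q hc1 (by omega) hq2
  have s2 := hlad p (p+1) hp1 (by omega) (by omega)
  refine (memY (p+1) q).2 ⟨by omega, by omega, hq1, hq2,
    ⟨by omega, by omega, by omega⟩, by omega⟩

/-- G1 : (r,c) ∈ X, (r,c+1) ∈ X ⇒ (r,c) ∈ Y -/
lemma lem_G1 (hlad' : Lad N' Δ') {r c : ℕ}
    (hx : (r, c) ∈ XsetK k N N' Δ Δ') (hx' : (r, c+1) ∈ XsetK k N N' Δ Δ') :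
    (r, c) ∈ YsetK k N N' Δ Δ' := by
  obtain ⟨hr1, hr2, hc1, hc2, ⟨x1, x2, x3⟩, x4⟩ := (memX r c).1 hx
  obtain ⟨_, _, _, hc2', ⟨u1, u2, u3⟩, u4⟩ := (memX r (c+1)).1 hx'
  have s1 := hlad' c (c+1) hc1 (by omega) hc2'
  refine (memY r c).2 ⟨hr1, hr2, hc1, hc2, ⟨by omega, by omega, by omega⟩, by omega⟩

/-- G2 : (r,c) ∈ X, (r+1,c) ∈ X ⇒ (r+1,c) ∈ Y -/
lemma lem_G2 (hlad : Lad N Δ) {r c : ℕ}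
    (hx : (r, c) ∈ XsetK k N N' Δ Δ') (hx' : (r+1, c) ∈ XsetK k N N' Δ Δ') :
    (r+1, c) ∈ YsetK k N N' Δ Δ' := by
  obtain ⟨hr1, hr2, hc1, hc2, ⟨x1, x2, x3⟩, x4⟩ := (memX r c).1 hx
  obtain ⟨_, hr2', _, _, ⟨u1, u2, u3⟩, u4⟩ := (memX (r+1) c).1 hx'
  have s1 := hlad r (r+1) hr1 (by omega) hr2'
  refine (memY (r+1) c).2 ⟨by omega, hr2', hc1, hc2, ⟨by omega, by omega, by omega⟩, by omega⟩

/-- G3 : (p+1,c) ∈ Y, (p,c+1) ∈ X ⇒ (p,c) ∈ X -/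
lemma lem_G3 (hlad : Lad N Δ) (hlad' : Lad N' Δ') {p c : ℕ}
    (hy : (p+1, c) ∈ YsetK k N N' Δ Δ') (hx : (p, c+1) ∈ XsetK k N N' Δ Δ') :
    (p, c) ∈ XsetK k N N' Δ Δ' := by
  obtain ⟨hr1, hr2, hc1, hc2, ⟨y1, y2, y3⟩, y4⟩ := (memY (p+1) c).1 hy
  obtain ⟨hp1, hp2, _, hc2', ⟨x1, x2, x3⟩, x4⟩ := (memX p (c+1)).1 hx
  have s1 := hlad p (p+1) hp1 (by omega) hr2
  have s2 := hlad' c (c+1) hc1 (by omega) hc2'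
  refine (memX p c).2 ⟨hp1, hp2, hc1, hc2, ⟨by omega, by omega, by omega⟩, by omega⟩

/-- G4 : (p+1,c) ∈ Y, (p,c+1) ∈ X ⇒ (p+1,c+1) ∈ X -/
lemma lem_G4 (hlad : Lad N Δ) (hlad' : Lad N' Δ') {p c : ℕ}
    (hy : (p+1, c) ∈ YsetK k N N' Δ Δ') (hx : (p, c+1) ∈ XsetK k N N' Δ Δ') :
    (p+1, c+1) ∈ XsetK k N N' Δ Δ' := by
  obtain ⟨hr1, hr2, hc1, hc2, ⟨y1, y2, y3⟩, y4⟩ := (memY (p+1) c).1 hy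
  obtain ⟨hp1, hp2, _, hc2', ⟨x1, x2, x3⟩, x4⟩ := (memX p (c+1)).1 hx
  have s1 := hlad p (p+1) hp1 (by omega) hr2
  have s2 := hlad' c (c+1) hc1 (by omega) hc2'
  refine (memX (p+1) (c+1)).2 ⟨by omega, hr2, by omega, hc2',
    ⟨by omega, by omega, by omega⟩, by omega⟩

/-- PL : (i,j) ∈ X, (i,c) ∈ Y, c+1 = j ⇒ Δ'_c ≺_k Δ'_j -/
lemma lem_PL (hlad' : Lad N' Δ') {i j c : ℕ}
    (hx : (i, j) ∈ XsetK k N N' Δ Δ') (hy : (i, c) ∈ YsetK k N N' Δ Δ')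
    (hcq : c + 1 = j) : SegPrecK k (Δ' c) (Δ' j) := by
  obtain ⟨hi1, hi2, hj1, hj2, ⟨x1, x2, x3⟩, x4⟩ := (memX i j).1 hx
  obtain ⟨_, _, hc1, hc2, ⟨y1, y2, y3⟩, y4⟩ := (memY i c).1 hy
  have s1 := hlad' c j hc1 (by omega) hj2
  exact ⟨⟨by omega, by omega, by omega⟩, by omega⟩

/-- PD : (i,j) ∈ X, (i+1,j) ∈ Y ⇒ Δ_i ≺_k Δ_{i+1} -/
lemma lem_PD (hlad : Lad N Δ) {i j : ℕ}
    (hx : (i, j) ∈ XsetK k N N' Δ Δ') (hy : (i+1, j) ∈ YsetK k N N' Δ Δ') :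
    SegPrecK k (Δ i) (Δ (i+1)) := by
  obtain ⟨hi1, hi2, hj1, hj2, ⟨x1, x2, x3⟩, x4⟩ := (memX i j).1 hx
  obtain ⟨_, hr2, _, _, ⟨y1, y2, y3⟩, y4⟩ := (memY (i+1) j).1 hy
  have s1 := hlad i (i+1) hi1 (by omega) hr2
  exact ⟨⟨by omega, by omega, by omega⟩, by omega⟩

end Geo

section W
variable {k : ℤ} {N N' : ℕ} {Δ Δ' : ℕ → ℤ × ℤ}

lemma castX {a b c d : ℕ} (h : (a, b) ∈ XsetK k N N' Δ Δ') (h1 : c = a) (h2 : d = b) :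
    (c, d) ∈ XsetK k N N' Δ Δ' := by rw [h1, h2]; exact h

lemma castY {a b c d : ℕ} (h : (a, b) ∈ YsetK k N N' Δ Δ') (h1 : c = a) (h2 : d = b) :
    (c, d) ∈ YsetK k N N' Δ Δ' := by rw [h1, h2]; exact h

lemma lem_W (hlad : Lad N Δ) (hlad' : Lad N' Δ') :
    ∀ K, ∀ i j n : ℕ, N - i < K →
      (∀ l, l ≤ n → (i + l, j + l) ∈ XsetK k N N' Δ Δ') →
      (i, j - 1) ∉ YsetK k N N' Δ Δ' →
      (i + n + 1, j + n) ∉ YsetK k N N' Δ Δ' →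
      NCk k N N' Δ Δ' := by
  intro K
  induction K with
  | zero => intro i j n h; omega
  | succ K ih =>
    intro i j n hK hblock hL hR
    classical
    have hx0 := hblock 0 (Nat.zero_le n)
    have hi1 : 1 ≤ i := ((memX _ _).1 hx0).1
    have hiN : i ≤ N := ((memX _ _).1 hx0).2.1
    have hj1 : 1 ≤ j := ((memX _ _).1 hx0).2.2.1
    have hex : ∃ l, (i + l + 1, j + l) ∉ YsetK k N N' Δ Δ' := ⟨n, hR⟩
    set m := Nat.find hex with hm
    have hmspec : (i + m + 1, j + m) ∉ YsetK k N N' Δ Δ' := Nat.find_spec hex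
    have hmmin : ∀ l, l < m → (i + l + 1, j + l) ∈ YsetK k N N' Δ Δ' := by
      intro l hl
      have := Nat.find_min hex hl
      exact not_not.1 this
    have hmn : m ≤ n := Nat.find_min' hex hR
    by_cases hXl : ∃ l, l < m ∧ (i + l + 1, j + l) ∈ XsetK k N N' Δ Δ'
    · obtain ⟨l0, hl0m, hQ⟩ := hXl
      have hQN : i + l0 + 1 ≤ N := ((memX _ _).1 hQ).2.1
      -- bottom search
      have hnotX0 : (i, j - 1) ∉ XsetK k N N' Δ Δ' := by
        intro h
        exact hL (lem_G1 hlad' h (castX hx0 rfl (by omega)))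
      have hex0 : ∃ s, (i + l0 - s, j + l0 - s - 1) ∉ XsetK k N N' Δ Δ' :=
        ⟨l0, by exact fun h => hnotX0 (castX h (by omega) (by omega))⟩
      set s0 := Nat.find hex0 with hs0
      have hs0spec : (i + l0 - s0, j + l0 - s0 - 1) ∉ XsetK k N N' Δ Δ' := Nat.find_spec hex0
      have hs0min : ∀ s, s < s0 → (i + l0 - s, j + l0 - s - 1) ∈ XsetK k N N' Δ Δ' :=
        fun s hs => not_not.1 (Nat.find_min hex0 hs)
      have hs0le : s0 ≤ l0 := Nat.find_min'  hex0
        (fun h => hnotX0 (castX h (by omega) (by omega)))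
      -- top search
      have hnotX1 : (i + m + 1, j + m) ∉ XsetK k N N' Δ Δ' := by
        intro h
        exact hmspec (lem_G2 hlad (hblock m hmn) h)
      have hex1 : ∃ s, (i + l0 + 2 + s, j + l0 + 1 + s) ∉ XsetK k N N' Δ Δ' :=
        ⟨m - l0 - 1, fun h => hnotX1 (castX h (by omega) (by omega))⟩
      set s1 := Nat.find hex1 with hs1
      have hs1spec : (i + l0 + 2 + s1, j + l0 + 1 + s1) ∉ XsetK k N N' Δ Δ' := Nat.find_spec hex1
      have hs1min : ∀ s, s < s1 → (i + l0 + 2 + s, j + l0 + 1 + s) ∈ XsetK k N N' Δ Δ' :=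
        fun s hs => not_not.1 (Nat.find_min hex1 hs)
      have hs1le : s1 ≤ m - l0 - 1 := Nat.find_min' hex1
        (fun h => hnotX1 (castX h (by omega) (by omega)))
      -- new block
      have hblock'' : ∀ l, l ≤ s0 + s1 →
          (i + l0 + 1 - s0 + l, j + l0 - s0 + l) ∈ XsetK k N N' Δ Δ' := by
        intro l hl
        rcases lt_trichotomy l s0 with h | h | h
        · exact castX (hs0min (s0 - 1 - l) (by omega)) (by omega) (by omega)
        · exact castX hQ (by omega) (by omega)
        · exact castX (hs1min (l - s0 - 1) (by omega)) (by omega) (by omega)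
      have hleft'' : (i + l0 + 1 - s0, j + l0 - s0 - 1) ∉ YsetK k N N' Δ Δ' := by
        intro h
        have h' : ((i + l0 - s0) + 1, j + l0 - s0 - 1) ∈ YsetK k N N' Δ Δ' :=
          castY h (by omega) rfl
        have hxw : (i + l0 - s0, (j + l0 - s0 - 1) + 1) ∈ XsetK k N N' Δ Δ' :=
          castX (hblock (l0 - s0) (by omega)) (by omega) (by omega)
        exact hs0spec (lem_G3 hlad hlad' h' hxw)
      have hright'' : (i + l0 + s1 + 2, j + l0 + s1) ∉ YsetK k N N' Δ Δ' := by
        intro h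
        have h' : ((i + l0 + s1 + 1) + 1, j + l0 + s1) ∈ YsetK k N N' Δ Δ' :=
          castY h (by omega) rfl
        have hxw : (i + l0 + s1 + 1, (j + l0 + s1) + 1) ∈ XsetK k N N' Δ Δ' :=
          castX (hblock (l0 + s1 + 1) (by omega)) (by omega) (by omega)
        exact hs1spec (castX (lem_G4 hlad hlad' h' hxw) (by omega) (by omega))
      refine ih (i + l0 + 1 - s0) (j + l0 - s0) (s0 + s1) (by omega) hblock''
        (by exact fun h => hleft'' (castY h rfl (by omega))) ?_
      exact fun h => hright'' (castY h (by omega) (by omega))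
    · push_neg at hXl
      refine ⟨i, j, m, fun l hl => hblock l (le_trans hl hmn), hL, hmspec, fun l hl => ?_⟩
      exact ⟨hmmin l hl, hXl l hl⟩
end W

section P1
variable {k : ℤ} {N N' : ℕ} {Δ Δ' : ℕ → ℤ × ℤ}

lemma part1 (hlad : Lad N Δ) (hlad' : Lad N' Δ')
    (hnc : NCk k N N' Δ Δ') : ¬ LCk k N N' Δ Δ' := by
  obtain ⟨i, j, m, hX, hL, hR, hQ⟩ := hnc
  rintro ⟨f, hinj, hf⟩
  have key : ∀ l, l ≤ m → f (i + l, j + l) = (i + l + 1, j + l) := by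
    intro l
    induction l using Nat.strong_induction_on with
    | _ l ihl =>
      intro hlm
      have hpX := hX l hlm
      obtain ⟨hfY, hcase⟩ := hf (i + l, j + l) hpX
      obtain ⟨hi1, hi2, hj1, hj2, _, _⟩ := (memX (i+l) (j+l)).1 hpX
      rcases hcase with ⟨h1, h2⟩ | ⟨h1, h2⟩
      · -- left case
        exfalso
        have hfp : f (i + l, j + l) = (i + l, (f (i + l, j + l)).2) := Prod.ext h1 rfl
        set c := (f (i + l, j + l)).2 with hcdef
        have hfY' : (i + l, c) ∈ YsetK k N N' Δ Δ' := hfp ▸ hfY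
        obtain ⟨_, _, hc1, hc2, _, _⟩ := (memY (i+l) c).1 hfY'
        have hlt : (Δ' c).1 < (Δ' (j + l)).1 := by
          have h3 : (Δ' c).1 + 1 ≤ (Δ' (j + l)).1 := h2.1.1
          omega
        have hc : c < j + l := lad_rev hlad' hc1 hc2 hj1 hj2 hlt
        rcases Nat.eq_zero_or_pos l with hl0 | hl0
        · subst hl0
          exact hL (castY (lem_L0 hlad' hpX hfY' hc) (by omega) (by omega))
        · rcases eq_or_lt_of_le (show c + 1 ≤ j + l from hc) with hceq | hclt
          · have hprev := ihl (l-1) (by omega) (by omega)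
            have heq : f (i + (l-1), j + (l-1)) = f (i + l, j + l) := by
              rw [hprev, hfp]
              have : i + (l - 1) + 1 = i + l := by omega
              have h2' : j + (l - 1) = c := by omega
              rw [this, h2']
            have := hinj (hX (l-1) (by omega)) hpX heq
            rw [Prod.ext_iff] at this
            simp at this; omega
          · have hx0 : (i + (l-1), j + (l-1)) ∈ XsetK k N N' Δ Δ' := hX (l-1) (by omega)
            have hx1 : ((i + (l-1)) + 1, (j + (l-1)) + 1) ∈ XsetK k N N' Δ Δ' :=
              castX hpX (by omega) (by omega)
            have hyc : ((i + (l-1)) + 1, c) ∈ YsetK k N N' Δ Δ' := castY hfY' (by omega) rfl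
            have hres := lem_L2 hlad hlad' hx0 hx1 hyc (show c < j + (l-1) by omega)
            exact (hQ (l-1) (by omega)).2 (castX hres (by omega) (by omega))
      · -- down case
        have hfp : f (i + l, j + l) = ((f (i + l, j + l)).1, j + l) := Prod.ext rfl h1
        set r := (f (i + l, j + l)).1 with hrdef
        have hfY' : (r, j + l) ∈ YsetK k N N' Δ Δ' := hfp ▸ hfY
        obtain ⟨hr1, hr2, _, _, _, _⟩ := (memY r (j+l)).1 hfY'
        have hlt : (Δ (i + l)).1 < (Δ r).1 := by
          have h3 : (Δ (i + l)).1 + 1 ≤ (Δ r).1 := h2.1.1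
          omega
        have hr : i + l < r := lad_rev hlad hi1 hi2 hr1 hr2 hlt
        rcases eq_or_lt_of_le (show i + l + 1 ≤ r from hr) with hreq | hrgt
        · rw [hfp, ← hreq]
        · exfalso
          rcases eq_or_lt_of_le hlm with hleqm | hlm'
          · subst hleqm
            exact hR (lem_R4a hlad hpX hfY' (by omega))
          · rcases eq_or_lt_of_le (show l + 1 ≤ m by omega) with hl1m | hl1m
            · have hres := lem_R4b hlad hlad' (hX m le_rfl) hfY' (by omega) (by omega)
              exact hR hres
            · have hx1 : ((i + l) + 1, (j + l) + 1) ∈ XsetK k N N' Δ Δ' :=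
                castX (hX (l+1) (by omega)) (by omega) (by omega)
              have hres := lem_D2 hlad hlad' hx1 hfY' (by omega)
              exact (hQ (l+1) hl1m).2 (castX hres (by omega) (by omega))
  have hkm := key m le_rfl
  have hfin := (hf (i + m, j + m) (hX m le_rfl)).1
  rw [hkm] at hfin
  exact hR hfin
end P1

section P2
variable {k : ℤ} {N N' : ℕ} {Δ Δ' : ℕ → ℤ × ℤ}

/-- p should be mapped left. -/
def Lft (k : ℤ) (N N' : ℕ) (Δ Δ' : ℕ → ℤ × ℤ) (p : ℕ × ℕ) : Prop :=
  ∀ t, (∀ s, s ≤ t → (p.1 - s, p.2 - s) ∈ XsetK k N N' Δ Δ') →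
    (p.1 - t, p.2 - t - 1) ∈ YsetK k N N' Δ Δ'

lemma lft_shift {p q : ℕ × ℕ} (hp : p ∈ XsetK k N N' Δ Δ')
    (h : Lft k N N' Δ Δ' p) (h1 : q.1 + 1 = p.1) (h2 : q.2 + 1 = p.2) :
    Lft k N N' Δ Δ' q := by
  intro t ht
  have := h (t + 1) (by
    intro s hs
    rcases Nat.eq_zero_or_pos s with rfl | hs0
    · simpa using hp
    · exact castX (ht (s - 1) (by omega)) (by omega) (by omega))
  exact castY this (by omega) (by omega)

lemma lem_fact1 {p : ℕ × ℕ} (hp : p ∈ XsetK k N N' Δ Δ') (h : Lft k N N' Δ Δ' p) :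
    (p.1, p.2 - 1) ∈ YsetK k N N' Δ Δ' := by
  have := h 0 (by
    intro s hs
    have : s = 0 := by omega
    subst this
    simpa using hp)
  exact castY this (by omega) rfl

lemma lem_fact2 (hlad : Lad N Δ) (hlad' : Lad N' Δ') (hnc : ¬ NCk k N N' Δ Δ')
    {p : ℕ × ℕ} (hp : p ∈ XsetK k N N' Δ Δ') (h : ¬ Lft k N N' Δ Δ' p) :
    (p.1 + 1, p.2) ∈ YsetK k N N' Δ Δ' := by
  rw [Lft] at h
  push_neg at h
  obtain ⟨t, ht, hty⟩ := h
  have htX := ht t le_rfl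
  obtain ⟨ha1, _, hb1, _, _, _⟩ := (memX (p.1 - t) (p.2 - t)).1 htX
  by_contra hY1
  apply hnc
  refine lem_W hlad hlad' (N + 1) (p.1 - t) (p.2 - t) t (by omega) ?_ hty ?_
  · intro l hl
    exact castX (ht (t - l) (by omega)) (by omega) (by omega)
  · exact fun hmem => hY1 (castY hmem (by omega) (by omega))

lemma part2 (hlad : Lad N Δ) (hlad' : Lad N' Δ') (hnc : ¬ NCk k N N' Δ Δ') :
    LCk k N N' Δ Δ' := by
  classical
  refine ⟨fun p => if Lft k N N' Δ Δ' p then (p.1, p.2 - 1) else (p.1 + 1, p.2), ?_, ?_⟩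
  · intro p hp q hq hfeq
    obtain ⟨_, _, hp2, _, _, _⟩ := (memX p.1 p.2).1 hp
    obtain ⟨_, _, hq2, _, _, _⟩ := (memX q.1 q.2).1 hq
    by_cases h1 : Lft k N N' Δ Δ' p <;> by_cases h2 : Lft k N N' Δ Δ' q <;>
      simp only [h1, h2, if_pos, if_neg, if_true, if_false] at hfeq <;>
      rw [Prod.ext_iff] at hfeq ⊢ <;> simp only at hfeq
    · omega
    · exfalso
      exact h2 (lft_shift hp h1 (by omega) (by omega))
    · exfalso
      exact h1 (lft_shift hq h2 (by omega) (by omega))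
    · omega
  · intro p hp
    dsimp only
    obtain ⟨_, _, hp2, _, _, _⟩ := (memX p.1 p.2).1 hp
    by_cases h1 : Lft k N N' Δ Δ' p
    · rw [if_pos h1]
      refine ⟨lem_fact1 hp h1, Or.inl ⟨rfl, ?_⟩⟩
      exact lem_PL hlad' hp (lem_fact1 hp h1) (by omega)
    · rw [if_neg h1]
      refine ⟨lem_fact2 hlad hlad' hnc hp h1, Or.inr ⟨rfl, ?_⟩⟩
      exact lem_PD hlad hp (lem_fact2 hlad hlad' hnc hp h1)
end P2


theorem stmt13 (k : ℤ) (N N' : ℕ) (Δ Δ' : ℕ → ℤ × ℤ)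
    (hlad : ∀ i j, 1 ≤ i → i < j → j ≤ N → (Δ i).1 < (Δ j).1 ∧ (Δ i).2 < (Δ j).2)
    (hlad' : ∀ i j, 1 ≤ i → i < j → j ≤ N' → (Δ' i).1 < (Δ' j).1 ∧ (Δ' i).2 < (Δ' j).2)
    (hlen : ∀ i, 1 ≤ i → i ≤ N → (Δ i).2 - (Δ i).1 + 1 < k)
    (hlen' : ∀ j, 1 ≤ j → j ≤ N' → (Δ' j).2 - (Δ' j).1 + 1 < k) :
    ¬ LCk k N N' Δ Δ' ↔ NCk k N N' Δ Δ' := by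
  constructor
  · intro h
    by_contra hnc
    exact h (part2 hlad hlad' hnc)
  · intro h
    exact part1 hlad hlad' h
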